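/- Let r ≥ 4 be real and define ρ_r via the sequence u₀ = 0, u₁ = 1, u_{i+2} = (r-2)u_{i+1} - u_i by ρ_r(0) = 0 and ρ_r(n) = 1 + u_{n-1}/(u_n + 1) for n ≥ 1. Then for every n ≥ 0, ρ_r(n+1) = r/(r - ρ_r(n)). -/
import Mathlib


/-- The recurrence ρ_r(n+1) = r/(r - ρ_r(n)) for the separating function. -/
theorem stmt_1 (r : ℝ) (hr : 4 ≤ r)
    (u : ℕ → ℝ) (hu0 : u 0 = 0) (hu1 : u 1 = 1)
    (hurec : ∀ i, u (i + 2) = (r - 2) * u (i + 1) - u i)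
    (rho : ℕ → ℝ) (hrho0 : rho 0 = 0)
    (hrho : ∀ n : ℕ, 1 ≤ n → rho n = 1 + u (n - 1) / (u n + 1)) :
    ∀ n : ℕ, rho (n + 1) = r / (r - rho n) := by
  have hnn : ∀ n, 0 ≤ u n ∧ u n ≤ u (n + 1) := by
    intro n
    induction n with
    | zero => constructor <;> simp [hu0, hu1]
    | succ m ih =>
      obtain ⟨h1, h2⟩ := ih
      refine ⟨le_trans h1 h2, ?_⟩
      rw [hurec]
      nlinarith
  have hinv : ∀ n, u (n + 1) ^ 2 - (r - 2) * u n * u (n + 1) + u n ^ 2 = 1 := by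
    intro n
    induction n with
    | zero => simp [hu0, hu1]
    | succ m ih =>
      rw [hurec]
      nlinarith [ih]
  intro n
  cases n with
  | zero =>
    have h1 : rho 1 = 1 + u 0 / (u 1 + 1) := hrho 1 le_rfl
    rw [h1, hrho0, hu0, hu1]
    norm_num
    rw [div_self (by linarith)]
  | succ m =>
    have ha := (hnn m).1
    have hab := (hnn m).2
    have hb := (hnn (m + 1)).1
    have hbc := (hnn (m + 1)).2
    have h1 : rho (m + 1) = 1 + u m / (u (m + 1) + 1) := by
      have := hrho (m + 1) (by omega); simpa using this
    have h2 : rho (m + 1 + 1) = 1 + u (m + 1) / (u (m + 2) + 1) := by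
      have := hrho (m + 2) (by omega); simpa using this
    have hb1 : (0:ℝ) < u (m + 1) + 1 := by linarith
    have hc1 : (0:ℝ) < u (m + 2) + 1 := by linarith
    have hlt : u m / (u (m + 1) + 1) < 1 := (div_lt_one hb1).mpr (by linarith)
    have hd : 0 < r - rho (m + 1) := by rw [h1]; linarith
    have hd' : r * (u (m + 1) + 1) - (u (m + 1) + 1 + u m) ≠ 0 := by
      have : u m < r * (u (m + 1) + 1) - (u (m + 1) + 1) := by nlinarith
      intro h; nlinarith
    rw [h2, h1]
    field_simp
    nlinarith [hinv (m + 1), hurec m, sq_nonneg (u m), sq_nonneg (u (m+1))]
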